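/- Let H be a Hopf algebra over a commutative ring R, regarded as a module algebra over itself via the trivial action on R. Then H is separable over R if and only if there exists a left or right integral t in H with ε(t) invertible in R. -/

import Mathlib

open TensorProduct

noncomputable section

/-! ### Integrals in a Hopf algebra -/

/-- `t` is a left integral in `H`: `h * t = ε(h) • t` for all `h ∈ H`. -/
def IsLeftIntegral (R : Type*) {H : Type*} [CommRing R] [Ring H] [HopfAlgebra R H]
    (t : H) : Prop :=
  ∀ h : H, h * t = Coalgebra.counit (R := R) h • t

/-- `t` is a right integral in `H`: `t * h = ε(h) • t` for all `h ∈ H`. -/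
def IsRightIntegral (R : Type*) {H : Type*} [CommRing R] [Ring H] [HopfAlgebra R H]
    (t : H) : Prop :=
  ∀ h : H, t * h = Coalgebra.counit (R := R) h • t

/-! ### Module algebras -/

variable (R H A : Type*)

/-- Given an `H`-action `ρ` on `A` (an `R`-algebra map `H → End_R A`),
`pairAction ρ w` is the operator on `A ⊗ A` given, for `w = Σ x ⊗ y`, by
`a ⊗ b ↦ Σ (x • a) ⊗ (y • b)`. -/
def pairAction [CommRing R] [Ring H] [HopfAlgebra R H] [Ring A] [Algebra R A]
    (ρ : H →ₐ[R] Module.End R A) :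
    H ⊗[R] H →ₗ[R] A ⊗[R] A →ₗ[R] A ⊗[R] A :=
  (TensorProduct.homTensorHomMap (RingHom.id R) A A A A) ∘ₗ
    (TensorProduct.map ρ.toLinearMap ρ.toLinearMap)

/-- A left `H`-module algebra structure on an `R`-algebra `A`: an `H`-module structure
(an `R`-algebra map `ρ : H → End_R A`) such that multiplication and unit of `A` are
morphisms of `H`-modules, i.e. `h • (a b) = Σ_(h) (h₁ • a)(h₂ • b)` and `h • 1 = ε(h) 1`;
in other words, `A` is an `R`-algebra in the category of left `H`-modules. -/
structure ModuleAlgebra [CommRing R] [Ring H] [HopfAlgebra R H] [Ring A] [Algebra R A] where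
  ρ : H →ₐ[R] Module.End R A
  act_mul : ∀ (h : H) (a b : A),
    ρ h (a * b) = LinearMap.mul' R A (pairAction R H A ρ (Coalgebra.comul h) (a ⊗ₜ[R] b))
  act_one : ∀ h : H, ρ h 1 = algebraMap R A (Coalgebra.counit h)

variable {R H A}

/-- The set of `H`-invariant elements `A^H = {a | h • a = ε(h) a}` of a module algebra. -/
def ModuleAlgebra.invariants [CommRing R] [Ring H] [HopfAlgebra R H] [Ring A] [Algebra R A]
    (ma : ModuleAlgebra R H A) : Set A :=
  {a : A | ∀ h : H, ma.ρ h a = Coalgebra.counit (R := R) h • a}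

/-- The set of central `H`-invariant elements `Z(A)^H` of a module algebra. -/
def ModuleAlgebra.centralInvariants [CommRing R] [Ring H] [HopfAlgebra R H] [Ring A]
    [Algebra R A] (ma : ModuleAlgebra R H A) : Set A :=
  {a : A | (∀ b : A, a * b = b * a) ∧ ∀ h : H, ma.ρ h a = Coalgebra.counit (R := R) h • a}

/-- A subset `I ⊆ A` is `H`-stable if it is closed under the `H`-action. -/
def IsHStable [CommRing R] [Ring H] [HopfAlgebra R H] [Ring A] [Algebra R A]
    (ma : ModuleAlgebra R H A) (I : Set A) : Prop :=
  ∀ h : H, ∀ x ∈ I, ma.ρ h x ∈ I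

variable (R H A)

/-- `B` realises the smash product `A # H` of a left `H`-module algebra `A` with `H`:
`B` contains `A` and `H` as subalgebras, the multiplication map `A ⊗_R H → B`,
`a ⊗ h ↦ a·h` is an `R`-module isomorphism (so `B = A ⊗_R H` as `R`-module), and
`(1 # h)(a # 1) = Σ_(h) (h₁ • a) # h₂` holds, which forces the smash product
multiplication `(a # h)(b # g) = Σ_(h) a (h₁ • b) # h₂ g`. -/
structure SmashProductStructure [CommRing R] [Ring H] [HopfAlgebra R H] [Ring A] [Algebra R A]
    (ma : ModuleAlgebra R H A) (B : Type*) [Ring B] [Algebra R B] where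
  ιA : A →ₐ[R] B
  ιH : H →ₐ[R] B
  mul_bij : Function.Bijective
    ((LinearMap.mul' R B) ∘ₗ (TensorProduct.map ιA.toLinearMap ιH.toLinearMap))
  commute_rel : ∀ (h : H) (a : A),
    ιH h * ιA a =
      LinearMap.mul' R B
        ((TensorProduct.map (ιA.toLinearMap ∘ₗ ((LinearMap.flip ma.ρ.toLinearMap) a))
          ιH.toLinearMap) (Coalgebra.comul h))

variable {R H A}

/-! ### Ideals and semiprimeness -/

/-- The ordered product `a₁ ⋯ aₙ` of a nonempty family of ring elements,
relative to a multiplication `μ`. -/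
def nProd {A : Type*} (μ : A → A → A) : A → List A → A
  | a, [] => a
  | a, b :: l => μ a (nProd μ b l)

/-- `I` is a two-sided ideal of `A` (described as a set). -/
def IsIdealSet (A : Type*) [Ring A] (I : Set A) : Prop :=
  (0 : A) ∈ I ∧ (∀ x ∈ I, ∀ y ∈ I, x + y ∈ I) ∧
    ∀ a : A, ∀ x ∈ I, a * x ∈ I ∧ x * a ∈ I

/-- `I` is a two-sided ideal with respect to a (possibly twisted) multiplication `μ`. -/
def IsIdealSetMul {A : Type*} [Ring A] (μ : A → A → A) (I : Set A) : Prop :=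
  (0 : A) ∈ I ∧ (∀ x ∈ I, ∀ y ∈ I, x + y ∈ I) ∧
    ∀ a : A, ∀ x ∈ I, μ a x ∈ I ∧ μ x a ∈ I

/-- `I` is a nilpotent ideal with respect to the multiplication `μ`: some power `Iⁿ`
vanishes, i.e. all products of `n + 1` elements of `I` are zero. -/
def IsNilpotentMulSet {A : Type*} [Zero A] (μ : A → A → A) (I : Set A) : Prop :=
  ∃ n : ℕ, ∀ f : Fin (n + 1) → A, (∀ i, f i ∈ I) →
    nProd μ (f 0) (List.ofFn fun i : Fin n => f i.succ) = 0

/-- A ring is semiprime if it has no nonzero nilpotent two-sided ideal. -/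
def RingIsSemiprime (A : Type*) [Ring A] : Prop :=
  ∀ I : Set A, IsIdealSet A I → IsNilpotentMulSet (· * ·) I → I ⊆ {0}

/-- A module algebra is `H`-semiprime if it has no nonzero nilpotent `H`-stable
two-sided ideal. -/
def IsHSemiprime [CommRing R] [Ring H] [HopfAlgebra R H] [Ring A] [Algebra R A]
    (ma : ModuleAlgebra R H A) : Prop :=
  ∀ I : Set A, IsIdealSet A I → IsHStable ma I → IsNilpotentMulSet (· * ·) I → I ⊆ {0}

/-! ### Separability of ring extensions -/

universe usep

/-- The families `x y : Fin n → T` represent a separability idempotent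
`ω = Σᵢ xᵢ ⊗ yᵢ ∈ T ⊗_S T` for the ring extension `f : S → T`: `Σᵢ xᵢ yᵢ = 1` and
`t ω = ω t` for all `t ∈ T`, where equality of elements of `T ⊗_S T` is expressed
through all `S`-balanced biadditive maps out of `T × T` (the universal property of
the tensor product of the `(T,S)`-bimodule `T` with the `(S,T)`-bimodule `T`). -/
def IsSeparabilityIdempotent {S : Type*} {T : Type usep} [Ring S] [Ring T] (f : S →+* T)
    {n : ℕ} (x y : Fin n → T) : Prop :=
  (∑ i, x i * y i) = 1 ∧
  ∀ (M : Type usep) [AddCommGroup M] (β : T → T → M),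
    (∀ t₁ t₂ u, β (t₁ + t₂) u = β t₁ u + β t₂ u) →
    (∀ t u₁ u₂, β t (u₁ + u₂) = β t u₁ + β t u₂) →
    (∀ (s : S) (t u : T), β (t * f s) u = β t (f s * u)) →
    ∀ t : T, (∑ i, β (t * x i) (y i)) = ∑ i, β (x i) (y i * t)

/-- The ring extension `f : S → T` is separable: there exists a separability
idempotent `ω ∈ T ⊗_S T`. -/
def IsSeparableExtension {S : Type*} {T : Type usep} [Ring S] [Ring T] (f : S →+* T) : Prop :=
  ∃ (n : ℕ) (x y : Fin n → T), IsSeparabilityIdempotent f x y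

/-!
Take `ω = Σ t₁ ⊗ S(t₂)` for a left integral `t` (symmetrically `Σ S(t₁) ⊗ t₂` for a right one),
so that `Σ t₁ S(t₂) = ε(t)`. Since `h₁ t = ε(h₁) t`, the identity `Σ h₁ ⊗ S(h₂) h₃ = h ⊗ 1`
moves `h` through `ω`:
`h t₁ ⊗ S(t₂) = Σ h₁ t₁ ⊗ S(t₂) S(h₂) h₃ = Σ (h₁ t)₁ ⊗ S((h₁ t)₂) h₂ = t₁ ⊗ S(t₂) h`,
so `ε(t)⁻¹ ω` is a separability idempotent. Conversely, the balanced map `(a, b) ↦ ε(b) a` turns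
`h ω = ω h` for a separability idempotent `ω = Σ xᵢ ⊗ yᵢ` into `h t = ε(h) t` for
`t = Σ ε(yᵢ) xᵢ`, and `ε(t) = ε(Σ xᵢ yᵢ) = 1`.
-/

open Coalgebra HopfAlgebra Algebra.TensorProduct

theorem TensorProduct.exists_fin_sum_tmul_eq {R M N : Type*} [CommSemiring R] [AddCommMonoid M]
    [AddCommMonoid N] [Module R M] [Module R N] (z : M ⊗[R] N) :
    ∃ (n : ℕ) (x : Fin n → M) (y : Fin n → N), ∑ i, x i ⊗ₜ[R] y i = z := by
  obtain ⟨s, rfl⟩ := TensorProduct.exists_finset z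
  refine ⟨s.card, fun i => (s.equivFin.symm i : M × N).1, fun i => (s.equivFin.symm i : M × N).2,
    ?_⟩
  rw [← Finset.sum_coe_sort s]
  exact Equiv.sum_comp s.equivFin.symm fun p : s => (p : M × N).1 ⊗ₜ[R] (p : M × N).2

section Separable

variable [CommRing R] [Ring A] [Algebra R A]

theorem isSeparabilityIdempotent_of_commute {n : ℕ} (x y : Fin n → A)
    (hone : ∑ i, x i * y i = 1)
    (hcomm : ∀ a : A, (a ⊗ₜ[R] 1) * ∑ i, x i ⊗ₜ[R] y i = (∑ i, x i ⊗ₜ[R] y i) * (1 ⊗ₜ a)) :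
    IsSeparabilityIdempotent (algebraMap R A) x y := by
  refine ⟨hone, fun M _ β hadd_left hadd_right hbal a => ?_⟩
  let Φ : A ⊗[R] A →+ M := TensorProduct.liftAddHom
    (AddMonoidHom.mk' (fun a => AddMonoidHom.mk' (β a) (hadd_right a))
      fun a b => AddMonoidHom.ext fun c => hadd_left a b c)
    fun r a b => by
      simp only [AddMonoidHom.mk'_apply]
      rw [Algebra.smul_def, Algebra.commutes, hbal, ← Algebra.smul_def]
  simpa [Φ, Finset.mul_sum, Finset.sum_mul] using congr(Φ $(hcomm a))

theorem isSeparableExtension_of_commute (ω : A ⊗[R] A) {r : R} (hr : IsUnit r)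
    (hω : LinearMap.mul' R A ω = algebraMap R A r)
    (hcomm : ∀ a : A, (a ⊗ₜ[R] 1) * ω = ω * (1 ⊗ₜ a)) :
    IsSeparableExtension (algebraMap R A) := by
  obtain ⟨n, x, y, hxy⟩ := TensorProduct.exists_fin_sum_tmul_eq ((↑hr.unit⁻¹ : R) • ω)
  refine ⟨n, x, y, isSeparabilityIdempotent_of_commute x y ?_ fun a => ?_⟩
  · calc ∑ i, x i * y i = LinearMap.mul' R A (∑ i, x i ⊗ₜ[R] y i) := by simp
      _ = 1 := by rw [hxy, map_smul, hω, Algebra.smul_def, ← map_mul, hr.val_inv_mul, map_one]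
  · rw [hxy, mul_smul_comm, smul_mul_assoc, hcomm]

def sandwich (ω : A ⊗[R] A) : A ⊗[R] A →ₗ[R] A ⊗[R] A :=
  TensorProduct.lift <| (LinearMap.mul R (A ⊗[R] A)).compl₁₂
    (LinearMap.mulRight R ω ∘ₗ (includeLeft : A →ₐ[R] A ⊗[R] A).toLinearMap)
    (includeRight : A →ₐ[R] A ⊗[R] A).toLinearMap

@[simp]
theorem sandwich_tmul (ω : A ⊗[R] A) (a d : A) :
    sandwich ω (a ⊗ₜ d) = (a ⊗ₜ 1) * ω * (1 ⊗ₜ d) := by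
  simp [sandwich]

theorem sandwich_mul_one_tmul (ω z : A ⊗[R] A) (d : A) :
    sandwich ω z * (1 ⊗ₜ d) = sandwich ω (z * (1 ⊗ₜ d)) := by
  induction z with
  | zero => simp
  | tmul a b => simp [mul_assoc]
  | add z z' hz hz' => simp [add_mul, hz, hz']

theorem tmul_one_mul_sandwich (ω z : A ⊗[R] A) (a : A) :
    (a ⊗ₜ 1) * sandwich ω z = sandwich ω ((a ⊗ₜ 1) * z) := by
  induction z with
  | zero => simp
  | tmul b d => simp only [sandwich_tmul, ← mul_assoc, tmul_mul_tmul, mul_one, one_mul]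
  | add z z' hz hz' => simp [mul_add, hz, hz']

end Separable

section Hopf

variable [CommRing R] [Ring H] [HopfAlgebra R H]

theorem lTensor_antipode_mul (x y : H ⊗[R] H) :
    (antipode R).lTensor H (x * y) =
      sandwich ((antipode R).lTensor H y) ((antipode R).lTensor H x) := by
  induction x with
  | zero => simp
  | add x x' hx hx' => simp [add_mul, hx, hx']
  | tmul a b =>
    induction y with
    | zero => simp
    | add y y' hy hy' => simp [mul_add, add_mul, hy, hy']
    | tmul c d => simp [antipode_mul_antidistrib]

theorem rTensor_antipode_mul (x y : H ⊗[R] H) :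
    (antipode R).rTensor H (x * y) =
      sandwich ((antipode R).rTensor H x) ((antipode R).rTensor H y) := by
  induction y with
  | zero => simp
  | add y y' hy hy' => simp [mul_add, hy, hy']
  | tmul c d =>
    induction x with
    | zero => simp
    | add x x' hx hx' => simp [mul_add, add_mul, hx, hx']
    | tmul a b => simp [antipode_mul_antidistrib]

theorem sum_lTensor_antipode_comul_mul_one_tmul {ι : Type*} {h : H} (r : Repr R h ι) :
    ∑ i ∈ r.index, (antipode R).lTensor H (comul (r.left i)) * (1 ⊗ₜ r.right i) = h ⊗ₜ[R] 1 := by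
  let L : H ⊗[R] (H ⊗[R] H) →ₗ[R] H ⊗[R] H :=
    (LinearMap.mul' R H ∘ₗ (antipode R).rTensor H).lTensor H
  calc _ = ∑ i ∈ r.index, ∑ j ∈ (ℛ R (r.left i)).index,
          L ((ℛ R (r.left i)).left j ⊗ₜ ((ℛ R (r.left i)).right j ⊗ₜ r.right i)) := by
        refine Finset.sum_congr rfl fun i _ => ?_
        rw [← (ℛ R (r.left i)).eq]
        simp [L, Finset.sum_mul]
    _ = ∑ i ∈ r.index, ∑ j ∈ (ℛ R (r.right i)).index,
          L (r.left i ⊗ₜ ((ℛ R (r.right i)).left j ⊗ₜ (ℛ R (r.right i)).right j)) := by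
        simpa only [map_sum] using
          congr(L $(sum_tmul_tmul_eq r (fun i => ℛ R (r.left i)) (fun i => ℛ R (r.right i))))
    _ = ∑ i ∈ r.index, r.left i ⊗ₜ algebraMap R H (counit (r.right i)) := by
        simp [L, ← TensorProduct.tmul_sum, sum_antipode_mul_eq_algebraMap_counit]
    _ = h ⊗ₜ 1 := by
        simpa only [map_sum, LinearMap.lTensor_tmul, Algebra.linearMap_apply, map_one] using
          congr((Algebra.linearMap R H).lTensor H $(sum_tmul_counit_eq r))

theorem sum_tmul_one_mul_rTensor_antipode_comul {ι : Type*} {h : H} (r : Repr R h ι) :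
    ∑ i ∈ r.index, (r.left i ⊗ₜ 1) * (antipode R).rTensor H (comul (r.right i)) = 1 ⊗ₜ[R] h := by
  let L : H ⊗[R] (H ⊗[R] H) →ₗ[R] H ⊗[R] H :=
    ((LinearMap.mul' R H ∘ₗ (antipode R).lTensor H).rTensor H) ∘ₗ
      (TensorProduct.assoc R H H H).symm.toLinearMap
  calc _ = ∑ i ∈ r.index, ∑ j ∈ (ℛ R (r.right i)).index,
          L (r.left i ⊗ₜ ((ℛ R (r.right i)).left j ⊗ₜ (ℛ R (r.right i)).right j)) := by
        refine Finset.sum_congr rfl fun i _ => ?_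
        rw [← (ℛ R (r.right i)).eq]
        simp [L, Finset.mul_sum]
    _ = ∑ i ∈ r.index, ∑ j ∈ (ℛ R (r.left i)).index,
          L ((ℛ R (r.left i)).left j ⊗ₜ ((ℛ R (r.left i)).right j ⊗ₜ r.right i)) := by
        simpa only [map_sum] using
          (congr(L $(sum_tmul_tmul_eq r (fun i => ℛ R (r.left i)) (fun i => ℛ R (r.right i))))).symm
    _ = ∑ i ∈ r.index, algebraMap R H (counit (r.left i)) ⊗ₜ r.right i := by
        simp [L, ← TensorProduct.sum_tmul, sum_mul_antipode_eq_algebraMap_counit]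
    _ = 1 ⊗ₜ h := by
        simpa only [map_sum, LinearMap.rTensor_tmul, Algebra.linearMap_apply, map_one] using
          congr((Algebra.linearMap R H).rTensor H $(sum_counit_tmul_eq r))

theorem IsLeftIntegral.tmul_one_mul_lTensor_antipode_comul {t : H} (ht : IsLeftIntegral R t)
    (h : H) : (h ⊗ₜ 1) * (antipode R).lTensor H (comul t) =
      (antipode R).lTensor H (comul t) * (1 ⊗ₜ h) := by
  set ω := (antipode R).lTensor H (comul t)
  let r := ℛ R h
  calc (h ⊗ₜ 1) * ω
      = ∑ i ∈ r.index, (antipode R).lTensor H (comul (r.left i * t)) * (1 ⊗ₜ r.right i) := by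
        simp_rw [ω, Bialgebra.comul_mul, lTensor_antipode_mul, sandwich_mul_one_tmul, ← map_sum,
          sum_lTensor_antipode_comul_mul_one_tmul, sandwich_tmul, ← one_def, mul_one]
    _ = ∑ i ∈ r.index, (counit (r.left i) • ω) * (1 ⊗ₜ r.right i) := by
        refine Finset.sum_congr rfl fun i _ => ?_
        rw [ht, map_smul, map_smul]
    _ = ω * (1 ⊗ₜ h) := by
        conv_rhs => rw [← sum_counit_smul r, TensorProduct.tmul_sum, Finset.mul_sum]
        simp_rw [TensorProduct.tmul_smul, mul_smul_comm, smul_mul_assoc]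

theorem IsRightIntegral.tmul_one_mul_rTensor_antipode_comul {t : H} (ht : IsRightIntegral R t)
    (h : H) : (h ⊗ₜ 1) * (antipode R).rTensor H (comul t) =
      (antipode R).rTensor H (comul t) * (1 ⊗ₜ h) := by
  set ω := (antipode R).rTensor H (comul t)
  let r := ℛ R h
  have hr : ∑ i ∈ r.index, counit (R := R) (r.right i) • r.left i = h := by
    simpa only [map_sum, TensorProduct.rid_tmul, one_smul] using
      congr(TensorProduct.rid R H $(sum_tmul_counit_eq r))
  calc (h ⊗ₜ 1) * ω = ∑ i ∈ r.index, (counit (R := R) (r.right i) • (r.left i ⊗ₜ 1)) * ω := by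
        conv_lhs => rw [← hr, TensorProduct.sum_tmul, Finset.sum_mul]
        simp_rw [TensorProduct.smul_tmul']
    _ = ∑ i ∈ r.index, (r.left i ⊗ₜ 1) * (antipode R).rTensor H (comul (t * r.right i)) := by
        refine Finset.sum_congr rfl fun i _ => ?_
        rw [ht, map_smul, map_smul, smul_mul_assoc, mul_smul_comm]
    _ = ω * (1 ⊗ₜ h) := by
        simp_rw [ω, Bialgebra.comul_mul, rTensor_antipode_mul, tmul_one_mul_sandwich, ← map_sum,
          sum_tmul_one_mul_rTensor_antipode_comul, sandwich_tmul, ← one_def, one_mul]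

theorem IsSeparabilityIdempotent.isLeftIntegral_sum_counit_smul {n : ℕ} {x y : Fin n → H}
    (hxy : IsSeparabilityIdempotent (algebraMap R H) x y) :
    IsLeftIntegral R (∑ i, counit (R := R) (y i) • x i) := by
  intro h
  have key := hxy.2 H (fun a b => counit (R := R) b • a) (by simp [smul_add]) (by simp [add_smul])
    (fun s a b => by
      simp [← Algebra.commutes, ← Algebra.smul_def, smul_smul, mul_comm]) h
  simpa [Finset.mul_sum, Finset.smul_sum, Bialgebra.counit_mul, smul_smul, mul_comm] using key

end Hopf

theorem counit_sum_counit_smul {R H : Type*} [CommRing R] [Ring H] [Bialgebra R H] {n : ℕ}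
    (x y : Fin n → H) :
    counit (R := R) (∑ i, counit (R := R) (y i) • x i) = counit (∑ i, x i * y i) := by
  simp [map_sum, Bialgebra.counit_mul, mul_comm]

theorem hopfAlgebra_separable_iff_integral
    {R H : Type*} [CommRing R] [Ring H] [HopfAlgebra R H] :
    IsSeparableExtension (algebraMap R H) ↔
      ∃ t : H, (IsLeftIntegral R t ∨ IsRightIntegral R t) ∧
        IsUnit (Coalgebra.counit (R := R) t) := by
  constructor
  · rintro ⟨n, x, y, hxy⟩
    refine ⟨_, Or.inl hxy.isLeftIntegral_sum_counit_smul, ?_⟩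
    rw [counit_sum_counit_smul, hxy.1, Bialgebra.counit_one]
    exact isUnit_one
  · rintro ⟨t, ht | ht, hu⟩
    · exact isSeparableExtension_of_commute _ hu (mul_antipode_lTensor_comul_apply t)
        ht.tmul_one_mul_lTensor_antipode_comul
    · exact isSeparableExtension_of_commute _ hu (mul_antipode_rTensor_comul_apply t)
        ht.tmul_one_mul_rTensor_antipode_comul

end
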